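/- For all nonnegative integers m, n and all real x, ∑_{k=0}^{m} S_{2,λ}(m,k) · (k)_{n,λ} · x^k = ∑_{k=0}^{n} ∑_{j=0}^{n−k} C(n,k) · C(n−k,j) · Bel_{m+k,λ}(x) · Bel_{n−k−j,λ}(−x) · (mλ)_{j,λ}. -/

import Mathlib

/-!
Let `θ = x d/dx`; since `θ x^k = k x^k`, the left side is `(θ)_{n,λ} Bel_{m,λ}(x)`. The linear map
`x^k ↦ (x)_k` turns `x + θ` into multiplication by `x`, so the recurrence
`(x)_{p+1,λ} = (x - pλ) (x)_{p,λ}` becomes `θ Bel_p = Bel_{p+1} - x Bel_p + pλ Bel_p`, and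
`θ` acts on `Bel_p(-x)` in the same way with the sign of `x` flipped. Applying `θ - nλ` to the
right side at `n` and using the product rule, the two `x`-terms cancel, the scalar `(m - j)λ`
left over extends `(mλ)_{j,λ}` to `(mλ)_{j+1,λ}`, and Pascal's rule (twice) gives the right side
at `n + 1`. Both sides thus satisfy the same recursion in `n` and agree at `n = 0`.
-/

open Finset

/-- Degenerate falling factorial `(y)_{r,λ}`. -/
noncomputable def degFall (lam x : ℝ) (n : ℕ) : ℝ := ∏ i ∈ Finset.range n, (x - i * lam)

/-- Ordinary falling factorial `(x)_k`. -/
noncomputable def fall (x : ℝ) (k : ℕ) : ℝ := ∏ i ∈ Finset.range k, (x - i)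

open Polynomial

theorem map_sum_choose_nsmul {M F : Type*} [AddCommMonoid M] [FunLike F M M]
    [AddMonoidHomClass F M M] (T : F) (f : ℕ → ℕ → M) (n : ℕ)
    (hT : ∀ i ∈ range (n + 1), T (f i (n - i)) = f i (n + 1 - i) + f (i + 1) (n - i)) :
    T (∑ i ∈ range (n + 1), n.choose i • f i (n - i)) =
      ∑ i ∈ range (n + 2), (n + 1).choose i • f i (n + 1 - i) := by
  simp only [map_sum, map_nsmul, sum_choose_succ_nsmul]
  rw [← sum_add_distrib]
  exact sum_congr rfl fun i hi => by rw [hT i hi, smul_add]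

theorem fall_succ (x : ℝ) (k : ℕ) : fall x (k + 1) = fall x k * (x - k) :=
  prod_range_succ _ _

theorem degFall_succ (lam x : ℝ) (n : ℕ) :
    degFall lam x (n + 1) = degFall lam x n * (x - n * lam) :=
  prod_range_succ _ _

theorem fall_natCast_of_lt {k j : ℕ} (h : k < j) : fall k j = 0 :=
  prod_eq_zero (mem_range.2 h) (sub_self _)

theorem fall_natCast_self_ne_zero (k : ℕ) : fall k k ≠ 0 :=
  prod_ne_zero_iff.2 fun i hi => sub_ne_zero.2 <| by
    exact_mod_cast (mem_range.1 hi).ne'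

/-- Evaluating at `x = k` kills every `fall x j` with `j > k`, so the system is triangular. -/
theorem eq_zero_of_forall_sum_mul_fall_eq_zero {c : ℕ → ℝ} {N : ℕ}
    (h : ∀ x, ∑ j ∈ range N, c j * fall x j = 0) : ∀ k < N, c k = 0 := by
  intro k
  induction k using Nat.strong_induction_on with
  | _ k ih =>
    intro hk
    have hsum : ∑ j ∈ range N, c j * fall k j = c k * fall k k := by
      refine sum_eq_single_of_mem k (mem_range.2 hk) fun j _ hjk => ?_
      rcases lt_or_gt_of_ne hjk with hlt | hgt
      · rw [ih j hlt (hlt.trans hk), zero_mul]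
      · rw [fall_natCast_of_lt hgt, mul_zero]
    have := h k
    rw [hsum] at this
    exact (mul_eq_zero.1 this).resolve_right (fall_natCast_self_ne_zero k)

/-- `θ = x d/dx`. -/
noncomputable def eulerOp : ℝ[X] →ₗ[ℝ] ℝ[X] := LinearMap.mulLeft ℝ X ∘ₗ derivative

theorem eulerOp_apply (q : ℝ[X]) : eulerOp q = X * derivative q := rfl

theorem eulerOp_monomial (i : ℕ) (a : ℝ) : eulerOp (monomial i a) = monomial i (a * i) := by
  cases i <;> simp [eulerOp_apply, X_mul_monomial]

theorem eulerOp_C_mul_X_pow (i : ℕ) (a : ℝ) : eulerOp (C a * X ^ i) = C (a * i) * X ^ i := by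
  simp only [C_mul_X_pow_eq_monomial, eulerOp_monomial]

theorem eulerOp_mul (p q : ℝ[X]) : eulerOp (p * q) = eulerOp p * q + p * eulerOp q := by
  simp only [eulerOp_apply, derivative_mul]
  ring

theorem eulerOp_C_mul (a : ℝ) (q : ℝ[X]) : eulerOp (C a * q) = C a * eulerOp q := by
  rw [eulerOp_apply, eulerOp_apply, derivative_C_mul]
  ring

theorem eulerOp_comp_neg_X (q : ℝ[X]) : eulerOp (q.comp (-X)) = (eulerOp q).comp (-X) := by
  simp only [eulerOp_apply, derivative_comp, mul_comp, X_comp, derivative_neg, derivative_X]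
  ring

noncomputable def fallSum : ℝ[X] →ₗ[ℝ] (ℝ → ℝ) :=
  lsum fun i => LinearMap.toSpanSingleton ℝ (ℝ → ℝ) (fun x => fall x i)

theorem fallSum_monomial (i : ℕ) (a : ℝ) (x : ℝ) : fallSum (monomial i a) x = a * fall x i := by
  simp [fallSum, lsum_apply, sum_monomial_index]

theorem fallSum_X_mul_add_eulerOp (q : ℝ[X]) (x : ℝ) :
    fallSum (X * q + eulerOp q) x = x * fallSum q x := by
  induction q using Polynomial.induction_on' with
  | add p q hp hq => simp only [mul_add, map_add, Pi.add_apply] at *; rw [← hp, ← hq]; ring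
  | monomial i a =>
    rw [X_mul_monomial, eulerOp_monomial, map_add, Pi.add_apply, fallSum_monomial,
      fallSum_monomial, fallSum_monomial, fall_succ]
    ring

theorem fallSum_injective : Function.Injective fallSum := by
  refine (injective_iff_map_eq_zero fallSum).2 fun q hq => ?_
  have hsum : ∀ x, ∑ i ∈ range (q.natDegree + 1), q.coeff i * fall x i = 0 := fun x => by
    have := congrFun hq x
    rw [as_sum_range' q _ q.natDegree.lt_succ_self, map_sum, Finset.sum_apply] at this
    simpa only [fallSum_monomial, Pi.zero_apply] using this
  ext i
  rcases lt_or_ge i (q.natDegree + 1) with hi | hi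
  · exact eq_zero_of_forall_sum_mul_fall_eq_zero hsum i hi
  · exact coeff_eq_zero_of_natDegree_lt hi

/-- `Bel_{p,λ}(x)`. -/
noncomputable def bell (S2 : ℕ → ℕ → ℝ) (p : ℕ) : ℝ[X] :=
  ∑ i ∈ range (p + 1), C (S2 p i) * X ^ i

theorem eval_bell (S2 : ℕ → ℕ → ℝ) (p : ℕ) (x : ℝ) :
    (bell S2 p).eval x = ∑ i ∈ range (p + 1), S2 p i * x ^ i := by
  simp [bell, eval_finsetSum]

theorem fallSum_bell (S2 : ℕ → ℕ → ℝ) (p : ℕ) (x : ℝ) :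
    fallSum (bell S2 p) x = ∑ i ∈ range (p + 1), S2 p i * fall x i := by
  simp only [bell, map_sum, Finset.sum_apply, C_mul_X_pow_eq_monomial, fallSum_monomial]

/-- `Q_N = ∑_j C(N,j) (mλ)_{j,λ} Bel_{N-j,λ}(-x)`. -/
noncomputable def negBellConv (lam : ℝ) (S2 : ℕ → ℕ → ℝ) (m N : ℕ) : ℝ[X] :=
  ∑ j ∈ range (N + 1), N.choose j • (C (degFall lam (m * lam) j) * (bell S2 (N - j)).comp (-X))

noncomputable def bellProductSum (lam : ℝ) (S2 : ℕ → ℕ → ℝ) (m n : ℕ) : ℝ[X] :=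
  ∑ k ∈ range (n + 1), n.choose k • (bell S2 (m + k) * negBellConv lam S2 m (n - k))

/-- `(θ)_{n,λ} Bel_{m,λ}`. -/
noncomputable def degFallEulerBell (lam : ℝ) (S2 : ℕ → ℕ → ℝ) (m n : ℕ) : ℝ[X] :=
  ∑ k ∈ range (m + 1), C (S2 m k * degFall lam k n) * X ^ k

theorem degFallEulerBell_zero (lam : ℝ) (S2 : ℕ → ℕ → ℝ) (m : ℕ) :
    degFallEulerBell lam S2 m 0 = bell S2 m := by
  simp [degFallEulerBell, bell, degFall]

theorem degFallEulerBell_succ (lam : ℝ) (S2 : ℕ → ℕ → ℝ) (m n : ℕ) :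
    degFallEulerBell lam S2 m (n + 1) =
      eulerOp (degFallEulerBell lam S2 m n) - C (n * lam) * degFallEulerBell lam S2 m n := by
  simp only [degFallEulerBell, map_sum, eulerOp_C_mul_X_pow, mul_sum, ← sum_sub_distrib,
    degFall_succ]
  refine sum_congr rfl fun k _ => ?_
  simp only [map_mul, map_sub, map_natCast]
  ring

section
variable {lam : ℝ} {S2 : ℕ → ℕ → ℝ}
  (hS2 : ∀ (n : ℕ) (x : ℝ), degFall lam x n = ∑ k ∈ range (n + 1), S2 n k * fall x k)
include hS2

theorem bell_zero : bell S2 0 = 1 := by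
  have h := hS2 0 0
  simp only [degFall, fall, range_zero, prod_empty, zero_add, range_one, sum_singleton,
    mul_one] at h
  simp [bell, ← h]

theorem eulerOp_bell (p : ℕ) :
    eulerOp (bell S2 p) = bell S2 (p + 1) - X * bell S2 p + C (p * lam) * bell S2 p := by
  suffices bell S2 (p + 1) = X * bell S2 p + eulerOp (bell S2 p) - C (p * lam) * bell S2 p by
    rw [this]; ring
  refine fallSum_injective (funext fun x => ?_)
  rw [map_sub, Pi.sub_apply, fallSum_X_mul_add_eulerOp, ← smul_eq_C_mul, map_smul,
    Pi.smul_apply, smul_eq_mul, fallSum_bell, fallSum_bell, ← hS2, ← hS2, degFall_succ]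
  ring

theorem eulerOp_bell_comp_neg_X (p : ℕ) :
    eulerOp ((bell S2 p).comp (-X)) = (bell S2 (p + 1)).comp (-X) + X * (bell S2 p).comp (-X)
      + C (p * lam) * (bell S2 p).comp (-X) := by
  rw [eulerOp_comp_neg_X, eulerOp_bell hS2]
  simp only [sub_comp, add_comp, mul_comp, X_comp, C_comp]
  ring

theorem eulerOp_negBellConv (m N : ℕ) :
    eulerOp (negBellConv lam S2 m N) = negBellConv lam S2 m (N + 1)
      + X * negBellConv lam S2 m N - C ((m - N) * lam) * negBellConv lam S2 m N := by
  let T := eulerOp - LinearMap.mulLeft ℝ X + LinearMap.mulLeft ℝ (C ((m - N) * lam))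
  have hT := map_sum_choose_nsmul T
    (fun j l => C (degFall lam (m * lam) j) * (bell S2 l).comp (-X)) N fun j hj => by
      have hjN : j ≤ N := Nat.lt_succ_iff.1 (mem_range.1 hj)
      simp only [T, LinearMap.add_apply, LinearMap.sub_apply, LinearMap.mulLeft_apply,
        eulerOp_C_mul, eulerOp_bell_comp_neg_X hS2, Nat.sub_add_comm hjN, degFall_succ,
        Nat.cast_sub hjN, map_mul, map_sub, map_natCast]
      ring
  simp only [T, LinearMap.add_apply, LinearMap.sub_apply, LinearMap.mulLeft_apply] at hT
  rw [← negBellConv, ← negBellConv] at hT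
  linear_combination hT

theorem bellProductSum_zero (m : ℕ) : bellProductSum lam S2 m 0 = bell S2 m := by
  simp [bellProductSum, negBellConv, degFall, bell_zero hS2]

theorem bellProductSum_succ (m n : ℕ) :
    eulerOp (bellProductSum lam S2 m n) - C (n * lam) * bellProductSum lam S2 m n =
      bellProductSum lam S2 m (n + 1) := by
  let T := eulerOp - LinearMap.mulLeft ℝ (C (n * lam))
  exact map_sum_choose_nsmul T
    (fun k l => bell S2 (m + k) * negBellConv lam S2 m l) n fun k hk => by
      have hkn : k ≤ n := Nat.lt_succ_iff.1 (mem_range.1 hk)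
      simp only [T, LinearMap.sub_apply, LinearMap.mulLeft_apply, eulerOp_mul,
        eulerOp_bell hS2, eulerOp_negBellConv hS2, Nat.sub_add_comm hkn, ← add_assoc,
        Nat.cast_sub hkn, Nat.cast_add, map_add, map_sub, map_mul, map_natCast]
      ring

theorem degFallEulerBell_eq_bellProductSum (m n : ℕ) :
    degFallEulerBell lam S2 m n = bellProductSum lam S2 m n := by
  induction n with
  | zero => rw [degFallEulerBell_zero, bellProductSum_zero hS2]
  | succ n ih => rw [degFallEulerBell_succ, ih, bellProductSum_succ hS2]

end

/-- with `Bel_{n,λ}(x) = ∑_{k=0}^n S_{2,λ}(n,k) x^k`,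
`∑_{k=0}^m S_{2,λ}(m,k) (k)_{n,λ} x^k
  = ∑_{k=0}^n ∑_{j=0}^{n−k} C(n,k) C(n−k,j) Bel_{m+k,λ}(x) Bel_{n−k−j,λ}(−x) (mλ)_{j,λ}`. -/
theorem degenerate_bell_product_identity (lam : ℝ) (S2 : ℕ → ℕ → ℝ)
    (hS2 : ∀ (n : ℕ) (x : ℝ), degFall lam x n = ∑ k ∈ range (n + 1), S2 n k * fall x k)
    (m n : ℕ) (x : ℝ) :
    ∑ k ∈ range (m + 1), S2 m k * degFall lam (k : ℝ) n * x ^ k =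
      ∑ k ∈ range (n + 1), ∑ j ∈ range (n - k + 1),
        (n.choose k : ℝ) * ((n - k).choose j : ℝ) *
          (∑ i ∈ range (m + k + 1), S2 (m + k) i * x ^ i) *
          (∑ i ∈ range (n - k - j + 1), S2 (n - k - j) i * (-x) ^ i) *
          degFall lam ((m : ℝ) * lam) j := by
  have h := congrArg (eval x) (degFallEulerBell_eq_bellProductSum hS2 m n)
  simp only [degFallEulerBell, bellProductSum, negBellConv, eval_finsetSum, eval_mul, eval_C,
    eval_pow, eval_X, eval_comp, eval_neg, eval_natCast, nsmul_eq_mul, mul_sum] at h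
  simp only [← eval_bell]
  rw [h]
  refine sum_congr rfl fun k _ => sum_congr rfl fun j _ => ?_
  ring
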